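/- Pullback identity for the contact form under front spinning (key identity in the proof of Proposition 1.4): let n ≥ 1, let E be a real normed vector space, and let f : E → ℝ^{2n+1} have component functions x_1, y_1, …, x_n, y_n, z, each differentiable at a point p ∈ E. Then for every θ ∈ ℝ the front-spun map Σf is differentiable at (p, θ), and for all v ∈ E and s ∈ ℝ, writing (X_0, Y_0, X_1, Y_1, …, X_n, Y_n, Z) for the component functions of Σf, one has DZ(p,θ)(v,s) − Σ_{i=0}^{n} Y_i(p,θ)·DX_i(p,θ)(v,s) = Dz(p)(v) − Σ_{i=1}^{n} y_i(p)·Dx_i(p)(v). Equivalently, the pullback of the contact form α_{n+1} under Σf equals the pullback of f*α_n under the projection E × ℝ → E. -/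

import Mathlib

/-!
Pullback identity for the contact form under front spinning.

Coordinates on `ℝ^{2n+1}` are `(x_1, y_1, …, x_n, y_n, z)`; a map
`f : E → ℝ^{2n+1}` is given by its component functions
`x i, y i : E → ℝ` (for `i = 1, …, n`) and `z : E → ℝ`.

The front spinning `Σf : E × ℝ → ℝ^{2n+3}` has component functions
`X_0 = x_1 sin θ`, `Y_0 = y_1 sin θ`, `X_1 = x_1 cos θ`, `Y_1 = y_1 cos θ`,
`X_i = x_i`, `Y_i = y_i` for `i ≥ 2`, and `Z = z`.
-/

/-- The `x`-component functions of the front-spun map. -/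
noncomputable def spinX {E : Type*} (x : ℕ → E → ℝ) : ℕ → E × ℝ → ℝ
  | 0 => fun q => x 1 q.1 * Real.sin q.2
  | 1 => fun q => x 1 q.1 * Real.cos q.2
  | (i + 2) => fun q => x (i + 2) q.1

/-- The `y`-component functions of the front-spun map. -/
noncomputable def spinY {E : Type*} (y : ℕ → E → ℝ) : ℕ → E × ℝ → ℝ
  | 0 => fun q => y 1 q.1 * Real.sin q.2
  | 1 => fun q => y 1 q.1 * Real.cos q.2
  | (i + 2) => fun q => y (i + 2) q.1

/-- The `z`-component function of the front-spun map. -/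
def spinZ {E : Type*} (z : E → ℝ) : E × ℝ → ℝ := fun q => z q.1

open Real ContinuousLinearMap Finset

theorem spinY_eq_spinX {E : Type*} : spinY (E := E) = spinX := rfl

section FrontSpinning

variable {E : Type*} [NormedAddCommGroup E] [NormedSpace ℝ E] {p : E}

theorem hasFDerivAt_comp_fst {F G : Type*} [NormedAddCommGroup F] [NormedSpace ℝ F]
    [NormedAddCommGroup G] [NormedSpace ℝ G] {g : E → F} (hg : DifferentiableAt ℝ g p) (t : G) :
    HasFDerivAt (fun q : E × G => g q.1) ((fderiv ℝ g p).comp (fst ℝ E G)) (p, t) :=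
  hg.hasFDerivAt.comp (p, t) hasFDerivAt_fst

theorem fderiv_comp_fst_apply {F G : Type*} [NormedAddCommGroup F] [NormedSpace ℝ F]
    [NormedAddCommGroup G] [NormedSpace ℝ G] {g : E → F} (hg : DifferentiableAt ℝ g p)
    (t : G) (v : E) (s : G) :
    fderiv ℝ (fun q : E × G => g q.1) (p, t) (v, s) = fderiv ℝ g p v := by
  rw [(hasFDerivAt_comp_fst hg t).fderiv]
  rfl

theorem hasFDerivAt_fst_mul_snd {g : E → ℝ} {h : ℝ → ℝ} {h' θ : ℝ}
    (hg : DifferentiableAt ℝ g p) (hh : HasDerivAt h h' θ) :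
    HasFDerivAt (fun q : E × ℝ => g q.1 * h q.2)
      (g p • h' • snd ℝ E ℝ + h θ • (fderiv ℝ g p).comp (fst ℝ E ℝ)) (p, θ) :=
  (hasFDerivAt_comp_fst hg θ).mul (hh.comp_hasFDerivAt (p, θ) hasFDerivAt_snd)

theorem fderiv_fst_mul_snd_apply {g : E → ℝ} {h : ℝ → ℝ} {h' θ : ℝ}
    (hg : DifferentiableAt ℝ g p) (hh : HasDerivAt h h' θ) (v : E) (s : ℝ) :
    fderiv ℝ (fun q : E × ℝ => g q.1 * h q.2) (p, θ) (v, s) =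
      g p * (h' * s) + h θ * fderiv ℝ g p v := by
  rw [(hasFDerivAt_fst_mul_snd hg hh).fderiv]
  rfl

theorem differentiableAt_spinX {x : ℕ → E → ℝ} {i : ℕ}
    (hx : DifferentiableAt ℝ (x (max i 1)) p) (θ : ℝ) :
    DifferentiableAt ℝ (spinX x i) (p, θ) :=
  match i with
  | 0 => (hasFDerivAt_fst_mul_snd hx (hasDerivAt_sin θ)).differentiableAt
  | 1 => (hasFDerivAt_fst_mul_snd hx (hasDerivAt_cos θ)).differentiableAt
  | _ + 2 => (hasFDerivAt_comp_fst hx θ).differentiableAt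

theorem differentiableAt_spinY {y : ℕ → E → ℝ} {i : ℕ}
    (hy : DifferentiableAt ℝ (y (max i 1)) p) (θ : ℝ) :
    DifferentiableAt ℝ (spinY y i) (p, θ) :=
  spinY_eq_spinX (E := E) ▸ differentiableAt_spinX hy θ

theorem sum_spinY_mul_fderiv_spinX {n : ℕ} (hn : 1 ≤ n) {x : ℕ → E → ℝ}
    (hx : ∀ i ∈ Icc 1 n, DifferentiableAt ℝ (x i) p) (y : ℕ → E → ℝ) (θ : ℝ) (v : E) (s : ℝ) :
    ∑ i ∈ Icc 0 n, spinY y i (p, θ) * fderiv ℝ (spinX x i) (p, θ) (v, s) =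
      ∑ i ∈ Icc 1 n, y i p * fderiv ℝ (x i) p v := by
  have hx₁ := hx 1 (left_mem_Icc.2 hn)
  -- the `θ`-derivatives of the two spun coordinates cancel, and `sin² θ + cos² θ = 1`
  have rotation : spinY y 0 (p, θ) * fderiv ℝ (spinX x 0) (p, θ) (v, s) +
      spinY y 1 (p, θ) * fderiv ℝ (spinX x 1) (p, θ) (v, s) = y 1 p * fderiv ℝ (x 1) p v := by
    change y 1 p * sin θ * fderiv ℝ (fun q : E × ℝ => x 1 q.1 * sin q.2) (p, θ) (v, s) +
      y 1 p * cos θ * fderiv ℝ (fun q : E × ℝ => x 1 q.1 * cos q.2) (p, θ) (v, s) = _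
    rw [fderiv_fst_mul_snd_apply hx₁ (hasDerivAt_sin θ),
      fderiv_fst_mul_snd_apply hx₁ (hasDerivAt_cos θ)]
    linear_combination y 1 p * fderiv ℝ (x 1) p v * sin_sq_add_cos_sq θ
  have tail : ∑ i ∈ Icc 2 n, spinY y i (p, θ) * fderiv ℝ (spinX x i) (p, θ) (v, s) =
      ∑ i ∈ Icc 2 n, y i p * fderiv ℝ (x i) p v := by
    refine sum_congr rfl fun i hi => ?_
    obtain ⟨j, rfl⟩ := Nat.exists_eq_add_of_le' (mem_Icc.1 hi).1
    exact congrArg _ (fderiv_comp_fst_apply (hx _ (mem_Icc.2 ⟨by omega, (mem_Icc.1 hi).2⟩)) θ v s)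
  rw [← add_sum_Ioc_eq_sum_Icc (Nat.zero_le n), ← Icc_add_one_left_eq_Ioc, zero_add,
    ← add_sum_Ioc_eq_sum_Icc hn, ← Icc_add_one_left_eq_Ioc, ← add_sum_Ioc_eq_sum_Icc hn,
    ← Icc_add_one_left_eq_Ioc, ← add_assoc, rotation]
  exact congrArg _ tail

end FrontSpinning

/-- **Pullback identity for the contact form under front spinning.**
If the component functions of `f` are differentiable at `p`, then the component
functions of `Σf` are differentiable at `(p, θ)` and
`DZ(p,θ)(v,s) − Σ_{i=0}^{n} Y_i(p,θ)·DX_i(p,θ)(v,s)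
  = Dz(p)(v) − Σ_{i=1}^{n} y_i(p)·Dx_i(p)(v)`,
i.e. `(Σf)^* α_{n+1}` is the pullback of `f^* α_n` under the projection
`E × ℝ → E`. -/
theorem front_spinning_contact_form_pullback
    {E : Type*} [NormedAddCommGroup E] [NormedSpace ℝ E]
    (n : ℕ) (hn : 1 ≤ n) (x y : ℕ → E → ℝ) (z : E → ℝ) (p : E)
    (hx : ∀ i ∈ Finset.Icc 1 n, DifferentiableAt ℝ (x i) p)
    (hy : ∀ i ∈ Finset.Icc 1 n, DifferentiableAt ℝ (y i) p)
    (hz : DifferentiableAt ℝ z p) (θ : ℝ) :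
    (∀ i ∈ Finset.Icc 0 n,
        DifferentiableAt ℝ (spinX x i) (p, θ) ∧ DifferentiableAt ℝ (spinY y i) (p, θ)) ∧
    DifferentiableAt ℝ (spinZ z) (p, θ) ∧
    ∀ (v : E) (s : ℝ),
      fderiv ℝ (spinZ z) (p, θ) (v, s) -
          ∑ i ∈ Finset.Icc 0 n, spinY y i (p, θ) * fderiv ℝ (spinX x i) (p, θ) (v, s) =
        fderiv ℝ z p v - ∑ i ∈ Finset.Icc 1 n, y i p * fderiv ℝ (x i) p v := by
  have max_mem {i : ℕ} (hi : i ∈ Icc 0 n) : max i 1 ∈ Icc 1 n :=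
    mem_Icc.2 ⟨le_max_right i 1, max_le (mem_Icc.1 hi).2 hn⟩
  refine ⟨fun i hi => ⟨differentiableAt_spinX (hx _ (max_mem hi)) θ,
      differentiableAt_spinY (hy _ (max_mem hi)) θ⟩,
    (hasFDerivAt_comp_fst hz θ).differentiableAt, fun v s => ?_⟩
  rw [sum_spinY_mul_fderiv_spinX hn hx y θ v s]
  congr 1
  exact fderiv_comp_fst_apply hz θ v s
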